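/- arXiv:2405.15861 — 2 statements merged into one kernel-verified Lean document; each statement's English description precedes it below -/
import Mathlib

section
/- For a Gaussian-smoothed function f^μ(x) = E_z[f(x + μz)] with z ~ N(0, I_d) and f having L-Lipschitz continuous gradient, the pointwise smoothing error satisfies |f^μ(x) - f(x)| ≤ (1/2) μ² L d for all x ∈ ℝ^d. -/
open MeasureTheory ProbabilityTheory

section Aux

open Real InnerProductSpace
open scoped ENNReal NNReal

namespace GaussianSmoothingAux

lemma pdf_eq (x : ℝ) : gaussianPDFReal 0 1 x = (Real.sqrt (2 * π))⁻¹ * Real.exp (-(1/2) * x^2) := by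
  unfold gaussianPDFReal
  push_cast
  rw [mul_one]
  congr 1
  ring

lemma pdf_toNNReal : gaussianReal 0 1 =
    (volume : Measure ℝ).withDensity (fun x => ((gaussianPDFReal 0 1 x).toNNReal : ℝ≥0∞)) := by
  rw [gaussianReal_of_var_ne_zero 0 one_ne_zero]
  rfl

lemma integrable_aux : Integrable (fun x : ℝ => (Real.sqrt (2 * π))⁻¹ * (x^2 * Real.exp (-(1/2) * x^2))) := by
  refine Integrable.const_mul ?_ _
  have h := integrable_rpow_mul_exp_neg_mul_sq (b := 1/2) (by norm_num) (s := 2) (by norm_num)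
  refine h.congr ?_
  filter_upwards with x
  rw [show ((2:ℝ)) = ((2:ℕ):ℝ) by norm_num, Real.rpow_natCast]

lemma smul_eq_aux (x : ℝ) : (gaussianPDFReal 0 1 x).toNNReal • x^2
    = (Real.sqrt (2 * π))⁻¹ * (x^2 * Real.exp (-(1/2) * x^2)) := by
  rw [NNReal.smul_def, Real.coe_toNNReal']
  rw [max_eq_left (gaussianPDFReal_nonneg 0 1 x), pdf_eq]
  rw [smul_eq_mul]
  ring

lemma integrable_sq_gaussian : Integrable (fun x : ℝ => x^2) (gaussianReal 0 1) := by
  rw [pdf_toNNReal, integrable_withDensity_iff_integrable_smul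
    ((measurable_gaussianPDFReal 0 1).real_toNNReal)]
  exact integrable_aux.congr (by filter_upwards with x using (smul_eq_aux x).symm)

lemma integral_sq_gaussian : ∫ x, x^2 ∂(gaussianReal 0 1) = 1 := by
  rw [pdf_toNNReal, integral_withDensity_eq_integral_smul
    ((measurable_gaussianPDFReal 0 1).real_toNNReal)]
  calc ∫ x : ℝ, ((gaussianPDFReal 0 1 x).toNNReal : ℝ≥0) • x^2
      = ∫ x : ℝ, (Real.sqrt (2 * π))⁻¹ * (x^2 * Real.exp (-(1/2) * x^2)) := by
        refine integral_congr_ae ?_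
        filter_upwards with x using smul_eq_aux x
    _ = (Real.sqrt (2 * π))⁻¹ * ∫ x : ℝ, x^2 * Real.exp (-(1/2) * x^2) := integral_const_mul _ _
    _ = 1 := by
        have heven : ∫ x : ℝ, x^2 * Real.exp (-(1/2) * x^2)
            = 2 * ∫ x in Set.Ioi (0:ℝ), x^2 * Real.exp (-(1/2) * x^2) := by
          rw [← integral_comp_abs (f := fun x => x^2 * Real.exp (-(1/2) * x^2))]
          congr 1; funext x; rw [sq_abs]
        have hIoi : ∫ x in Set.Ioi (0:ℝ), x^2 * Real.exp (-(1/2) * x^2)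
            = (1/2:ℝ) ^ (-((2:ℝ)+1)/2) * (1/2) * Real.Gamma (((2:ℝ)+1)/2) := by
          rw [← integral_rpow_mul_exp_neg_mul_rpow (by norm_num) (by norm_num : (-1:ℝ) < 2) (by norm_num : (0:ℝ) < 1/2)]
          refine setIntegral_congr_fun measurableSet_Ioi (fun x hx => ?_)
          have hx2 : x ^ (2:ℝ) = x ^ 2 := by
            rw [show ((2:ℝ)) = ((2:ℕ):ℝ) by norm_num, Real.rpow_natCast]
          rw [hx2]
        rw [heven, hIoi]
        have hG : Real.Gamma (((2:ℝ)+1)/2) = (1/2) * Real.sqrt π := by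
          rw [show ((2:ℝ)+1)/2 = 1/2 + 1 by norm_num, Real.Gamma_add_one (by norm_num)]
          rw [Real.Gamma_one_half_eq]
        have hpow : (1/2:ℝ) ^ (-((2:ℝ)+1)/2) = 2 * Real.sqrt 2 := by
          rw [one_div, Real.inv_rpow (by norm_num), show (-((2:ℝ)+1)/2) = -((3:ℝ)/2) by norm_num,
            Real.rpow_neg (by norm_num), inv_inv, show ((3:ℝ)/2) = 1 + 1/2 by norm_num,
            Real.rpow_add (by norm_num), Real.rpow_one, ← Real.sqrt_eq_rpow]
        rw [hG, hpow, Real.sqrt_mul (by norm_num : (0:ℝ) ≤ 2)]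
        have h2 : Real.sqrt 2 > 0 := Real.sqrt_pos.mpr (by norm_num)
        have hπ : Real.sqrt π > 0 := Real.sqrt_pos.mpr Real.pi_pos
        field_simp

lemma taylor_quad {E : Type*} [NormedAddCommGroup E] [InnerProductSpace ℝ E] [CompleteSpace E]
    (f : E → ℝ) (L : ℝ) (hL : 0 ≤ L) (hdiff : Differentiable ℝ f)
    (hlip : ∀ a b, ‖gradient f a - gradient f b‖ ≤ L * ‖a - b‖) (x v : E) :
    |f (x + v) - f x - ⟪gradient f x, v⟫_ℝ| ≤ L/2 * ‖v‖^2 := by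
  have hfd : ∀ a b : E, ‖fderiv ℝ f a - fderiv ℝ f b‖ ≤ L * ‖a - b‖ := by
    intro a b
    have ha : fderiv ℝ f a = toDual ℝ E (gradient f a) :=
      (LinearIsometryEquiv.apply_symm_apply (toDual ℝ E) (fderiv ℝ f a)).symm
    have hb : fderiv ℝ f b = toDual ℝ E (gradient f b) :=
      (LinearIsometryEquiv.apply_symm_apply (toDual ℝ E) (fderiv ℝ f b)).symm
    rw [ha, hb, ← map_sub, LinearIsometryEquiv.norm_map]
    exact hlip a b
  have hcont : Continuous (fderiv ℝ f) := by
    rw [Metric.continuous_iff]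
    intro a ε hε
    rcases eq_or_lt_of_le hL with h0 | h0
    · exact ⟨1, one_pos, fun b _ => by
        have := hfd b a; rw [← h0, zero_mul] at this
        simpa [dist_eq_norm] using lt_of_le_of_lt this hε⟩
    · refine ⟨ε / L, div_pos hε h0, fun b hb => ?_⟩
      rw [dist_eq_norm] at *
      calc ‖fderiv ℝ f b - fderiv ℝ f a‖ ≤ L * ‖b - a‖ := hfd b a
        _ < L * (ε / L) := by exact mul_lt_mul_of_pos_left hb h0
        _ = ε := by field_simp
  have hline : ∀ t : ℝ, HasDerivAt (fun t : ℝ => x + t • v) v t := by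
    intro t
    simpa using ((hasDerivAt_id t).smul_const v).const_add x
  have hphi : ∀ t : ℝ, HasDerivAt (fun t : ℝ => f (x + t • v)) (fderiv ℝ f (x + t • v) v) t :=
    fun t => ((hdiff _).hasFDerivAt).comp_hasDerivAt t (hline t)
  have hderivcont : Continuous (fun t : ℝ => fderiv ℝ f (x + t • v) v) := by
    exact (hcont.comp (by continuity)).clm_apply continuous_const
  have hFTC : ∫ t in (0:ℝ)..1, fderiv ℝ f (x + t • v) v = f (x + v) - f x := by
    have := intervalIntegral.integral_eq_sub_of_hasDerivAt (a := 0) (b := 1)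
      (fun t _ => hphi t) (hderivcont.intervalIntegrable 0 1)
    simpa using this
  have hinner : ⟪gradient f x, v⟫_ℝ = fderiv ℝ f x v := by
    rw [← toDual_apply_apply]
    congr 1
    exact LinearIsometryEquiv.apply_symm_apply (toDual ℝ E) (fderiv ℝ f x)
  have hconst : ∫ t in (0:ℝ)..1, fderiv ℝ f x v = fderiv ℝ f x v := by simp
  have hsub : f (x + v) - f x - ⟪gradient f x, v⟫_ℝ
      = ∫ t in (0:ℝ)..1, (fderiv ℝ f (x + t • v) v - fderiv ℝ f x v) := by
    rw [intervalIntegral.integral_sub (hderivcont.intervalIntegrable 0 1)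
      (intervalIntegrable_const), hFTC, hconst, hinner]
  have hbound : ∀ t ∈ Set.Icc (0:ℝ) 1,
      ‖fderiv ℝ f (x + t • v) v - fderiv ℝ f x v‖ ≤ (L * ‖v‖^2) * t := by
    intro t ht
    have : fderiv ℝ f (x + t • v) v - fderiv ℝ f x v
        = (fderiv ℝ f (x + t • v) - fderiv ℝ f x) v := by simp
    rw [this]
    calc ‖(fderiv ℝ f (x + t • v) - fderiv ℝ f x) v‖
        ≤ ‖fderiv ℝ f (x + t • v) - fderiv ℝ f x‖ * ‖v‖ := ContinuousLinearMap.le_opNorm _ _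
      _ ≤ (L * ‖x + t • v - x‖) * ‖v‖ := by
          exact mul_le_mul_of_nonneg_right (hfd _ _) (norm_nonneg v)
      _ = (L * ‖v‖^2) * t := by
          rw [add_sub_cancel_left, norm_smul, Real.norm_eq_abs, abs_of_nonneg ht.1]
          ring
  have hgint : ∫ t in (0:ℝ)..1, (L * ‖v‖^2) * t = L/2 * ‖v‖^2 := by
    rw [intervalIntegral.integral_const_mul, integral_id]
    ring
  have hle := intervalIntegral.norm_integral_le_abs_of_norm_le (μ := volume) (a := 0) (b := 1)
    (f := fun t => fderiv ℝ f (x + t • v) v - fderiv ℝ f x v)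
    (g := fun t => (L * ‖v‖^2) * t)
    (by filter_upwards [ae_restrict_mem measurableSet_uIoc] with t ht
        have ht' : t ∈ Set.Icc (0:ℝ) 1 := by
          rcases Set.mem_uIoc.mp ht with h | h
          · exact ⟨le_of_lt h.1, h.2⟩
          · exact ⟨by linarith [h.1, h.2], by linarith [h.1, h.2]⟩
        exact hbound t ht')
    ((continuous_const.mul continuous_id).intervalIntegrable 0 1)
  rw [hgint] at hle
  calc |f (x + v) - f x - ⟪gradient f x, v⟫_ℝ|
      = ‖∫ t in (0:ℝ)..1, (fderiv ℝ f (x + t • v) v - fderiv ℝ f x v)‖ := by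
        rw [← hsub, Real.norm_eq_abs]
    _ ≤ |L/2 * ‖v‖^2| := hle
    _ = L/2 * ‖v‖^2 := abs_of_nonneg (by positivity)

end GaussianSmoothingAux

end Aux

/-- The standard Gaussian measure `N(0, I_d)` on `ℝ^d`. -/
noncomputable def stdGaussian (d : ℕ) : Measure (EuclideanSpace ℝ (Fin d)) :=
  (Measure.pi fun _ : Fin d => gaussianReal 0 1).map
    (MeasurableEquiv.toLp 2 (Fin d → ℝ))

namespace GaussianSmoothingAux

open Real InnerProductSpace
open scoped ENNReal NNReal

instance (d : ℕ) : IsProbabilityMeasure (stdGaussian d) :=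
  Measure.isProbabilityMeasure_map (MeasurableEquiv.measurable _).aemeasurable

lemma pi_map_eval (d : ℕ) (i : Fin d) :
    (Measure.pi fun _ : Fin d => gaussianReal 0 1).map (Function.eval i) = gaussianReal 0 1 := by
  ext s hs
  rw [Measure.map_apply (measurable_pi_apply i) hs]
  have : Function.eval i ⁻¹' s = Set.pi Set.univ (Function.update (fun _ : Fin d => (Set.univ : Set ℝ)) i s) := by
    ext y
    simp [Function.eval, Set.mem_pi, Function.update]
  rw [this, Measure.pi_pi]
  rw [Finset.prod_eq_single i]
  · simp
  · intro j _ hj; simp [Function.update, hj]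
  · simp

lemma pi_map_neg (d : ℕ) :
    (Measure.pi fun _ : Fin d => gaussianReal 0 1).map (fun y : Fin d → ℝ => -y)
      = Measure.pi fun _ : Fin d => gaussianReal 0 1 := by
  have hneg : Measurable (fun y : Fin d → ℝ => -y) := measurable_pi_lambda _ fun i => (measurable_pi_apply i).neg
  refine (Measure.pi_eq (μ := fun _ : Fin d => gaussianReal 0 1) (fun s hs => ?_)).symm
  rw [Measure.map_apply hneg (MeasurableSet.univ_pi hs)]
  have : (fun y : Fin d → ℝ => -y) ⁻¹' (Set.pi Set.univ s) = Set.pi Set.univ (fun i => (fun x : ℝ => -x) ⁻¹' (s i)) := by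
    ext y; simp [Set.mem_pi]
  rw [this, Measure.pi_pi]
  congr 1
  funext i
  have hmapneg : (gaussianReal 0 1).map (fun x : ℝ => -x) = gaussianReal 0 1 := by
    have := gaussianReal_map_const_mul (μ := 0) (v := 1) (-1 : ℝ)
    simpa using this
  have h2 : (gaussianReal 0 1) ((fun x : ℝ => -x) ⁻¹' (s i)) = (gaussianReal 0 1) (s i) := by
    conv_rhs => rw [← hmapneg]
    rw [Measure.map_apply measurable_neg (hs i)]
  simpa using h2

lemma stdGaussian_map_neg (d : ℕ) :
    (stdGaussian d).map (fun z => -z) = stdGaussian d := by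
  unfold _root_.stdGaussian
  rw [Measure.map_map continuous_neg.measurable (MeasurableEquiv.measurable _)]
  rw [show ((fun z : EuclideanSpace ℝ (Fin d) => -z) ∘ (MeasurableEquiv.toLp 2 (Fin d → ℝ)))
      = ((MeasurableEquiv.toLp 2 (Fin d → ℝ)) ∘ (fun y : Fin d → ℝ => -y)) from rfl]
  rw [← Measure.map_map (MeasurableEquiv.measurable _) (measurable_neg : Measurable (fun y : Fin d → ℝ => -y)), pi_map_neg]

lemma integrable_eval_sq (d : ℕ) (i : Fin d) :
    Integrable (fun y : Fin d → ℝ => (y i)^2) (Measure.pi fun _ : Fin d => gaussianReal 0 1) := by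
  have h : Integrable ((fun x : ℝ => x^2) ∘ (Function.eval i))
      (Measure.pi fun _ : Fin d => gaussianReal 0 1) := by
    rw [← integrable_map_measure (μ := Measure.pi fun _ : Fin d => gaussianReal 0 1)
      (f := Function.eval i) (g := fun x : ℝ => x^2) ?_ (measurable_pi_apply i).aemeasurable]
    · rw [pi_map_eval d i]; exact integrable_sq_gaussian
    · rw [pi_map_eval d i]; exact integrable_sq_gaussian.aestronglyMeasurable
  exact h

lemma integral_eval_sq (d : ℕ) (i : Fin d) :
    ∫ y, (y i)^2 ∂(Measure.pi fun _ : Fin d => gaussianReal 0 1) = 1 := by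
  have h := integral_map (μ := Measure.pi fun _ : Fin d => gaussianReal 0 1)
    (φ := (Function.eval i : (Fin d → ℝ) → ℝ)) (f := fun x : ℝ => x^2)
    (measurable_pi_apply i).aemeasurable ?_
  · rw [pi_map_eval d i] at h
    rw [← h, integral_sq_gaussian]
  · rw [pi_map_eval d i]
    exact integrable_sq_gaussian.aestronglyMeasurable

lemma norm_symm_sq (d : ℕ) (y : Fin d → ℝ) :
    ‖(MeasurableEquiv.toLp 2 (Fin d → ℝ)) y‖^2 = ∑ i, (y i)^2 := by
  rw [MeasurableEquiv.coe_toLp]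
  rw [EuclideanSpace.norm_eq]
  rw [Real.sq_sqrt (by positivity)]
  simp [PiLp.toLp_apply, Real.norm_eq_abs, sq_abs]

lemma integrable_norm_sq_stdGaussian (d : ℕ) :
    Integrable (fun z => ‖z‖^2) (stdGaussian d) := by
  unfold _root_.stdGaussian
  rw [integrable_map_equiv]
  have : ((fun z : EuclideanSpace ℝ (Fin d) => ‖z‖^2) ∘ (MeasurableEquiv.toLp 2 (Fin d → ℝ)))
      = fun y : Fin d → ℝ => ∑ i, (y i)^2 := by
    funext y; exact norm_symm_sq d y
  rw [this]
  exact integrable_finset_sum _ (fun i _ => integrable_eval_sq d i)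

lemma integral_norm_sq_stdGaussian (d : ℕ) :
    ∫ z, ‖z‖^2 ∂(stdGaussian d) = d := by
  unfold _root_.stdGaussian
  rw [integral_map_equiv]
  have : (fun y : Fin d → ℝ => ‖(MeasurableEquiv.toLp 2 (Fin d → ℝ)) y‖^2)
      = fun y : Fin d → ℝ => ∑ i, (y i)^2 := by
    funext y; exact norm_symm_sq d y
  rw [this]
  rw [integral_finset_sum _ (fun i _ => integrable_eval_sq d i)]
  simp [integral_eval_sq]

lemma integrable_norm_stdGaussian (d : ℕ) :
    Integrable (fun z => ‖z‖) (stdGaussian d) := by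
  refine ((integrable_const (1:ℝ)).add (integrable_norm_sq_stdGaussian d)).mono' ?_ ?_
  · exact (continuous_norm).aestronglyMeasurable
  · filter_upwards with z
    simp only [Pi.add_apply]
    rw [Real.norm_eq_abs, abs_of_nonneg (norm_nonneg z)]
    nlinarith [sq_nonneg (‖z‖ - 1)]

lemma integral_inner_stdGaussian (d : ℕ) (g : EuclideanSpace ℝ (Fin d)) :
    ∫ z, ⟪g, z⟫_ℝ ∂(stdGaussian d) = 0 := by
  have hcont : Continuous (fun z : EuclideanSpace ℝ (Fin d) => ⟪g, z⟫_ℝ) :=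
    continuous_const.inner continuous_id
  have h1 : ∫ z, ⟪g, z⟫_ℝ ∂(stdGaussian d)
      = ∫ z, ⟪g, z⟫_ℝ ∂((stdGaussian d).map (fun z => -z)) := by
    rw [stdGaussian_map_neg]
  have h2 : ∫ z, ⟪g, z⟫_ℝ ∂((stdGaussian d).map (fun z => -z))
      = ∫ z, ⟪g, -z⟫_ℝ ∂(stdGaussian d) := by
    rw [integral_map continuous_neg.measurable.aemeasurable hcont.aestronglyMeasurable]
  have h3 : ∫ z, ⟪g, -z⟫_ℝ ∂(stdGaussian d) = - ∫ z, ⟪g, z⟫_ℝ ∂(stdGaussian d) := by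
    simp_rw [inner_neg_right]
    exact integral_neg _
  have := h1.trans (h2.trans h3)
  linarith

end GaussianSmoothingAux

open GaussianSmoothingAux InnerProductSpace in
/-- Pointwise smoothing error of Gaussian smoothing:
`|f^μ(x) - f(x)| ≤ (1/2) μ² L d`. -/
theorem gaussian_smoothing_value_error
    (d : ℕ) (L μ : ℝ) (hL : 0 ≤ L) (hμ : 0 < μ)
    (f : EuclideanSpace ℝ (Fin d) → ℝ)
    (hdiff : Differentiable ℝ f)
    (hlip : ∀ x y, ‖gradient f x - gradient f y‖ ≤ L * ‖x - y‖) :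
    ∀ x : EuclideanSpace ℝ (Fin d),
      |(∫ z, f (x + μ • z) ∂(stdGaussian d)) - f x| ≤ (1/2) * μ^2 * L * d := by
  intro x
  set g := gradient f x with hg
  have hTay : ∀ v, |f (x + v) - f x - ⟪g, v⟫_ℝ| ≤ L/2 * ‖v‖^2 :=
    fun v => taylor_quad f L hL hdiff hlip x v
  -- integrability facts
  have hinner_int : Integrable (fun z => ⟪g, μ • z⟫_ℝ) (stdGaussian d) := by
    refine ((integrable_norm_stdGaussian d).const_mul (‖g‖ * μ)).mono' ?_ ?_
    · exact (by fun_prop : Continuous fun z : EuclideanSpace ℝ (Fin d) => ⟪g, μ • z⟫_ℝ).aestronglyMeasurable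
    · filter_upwards with z
      rw [Real.norm_eq_abs]
      calc |⟪g, μ • z⟫_ℝ| ≤ ‖g‖ * ‖μ • z‖ := abs_real_inner_le_norm g (μ • z)
        _ = ‖g‖ * μ * ‖z‖ := by
            rw [norm_smul, Real.norm_eq_abs, abs_of_pos hμ]; ring
  have hf_int : Integrable (fun z => f (x + μ • z)) (stdGaussian d) := by
    refine Integrable.mono' (g := fun z => |f x| + ‖g‖ * μ * ‖z‖ + L/2 * μ^2 * ‖z‖^2) ?_ ?_ ?_
    · exact ((integrable_const _).add (((integrable_norm_stdGaussian d).const_mul _))).add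
        ((integrable_norm_sq_stdGaussian d).const_mul _)
    · exact (hdiff.continuous.comp (by fun_prop : Continuous fun z : EuclideanSpace ℝ (Fin d) => x + μ • z)).aestronglyMeasurable
    · filter_upwards with z
      have h1 := hTay (μ • z)
      have h2 : |⟪g, μ • z⟫_ℝ| ≤ ‖g‖ * μ * ‖z‖ := by
        calc |⟪g, μ • z⟫_ℝ| ≤ ‖g‖ * ‖μ • z‖ := abs_real_inner_le_norm g (μ • z)
          _ = ‖g‖ * μ * ‖z‖ := by rw [norm_smul, Real.norm_eq_abs, abs_of_pos hμ]; ring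
      have h3 : ‖μ • z‖^2 = μ^2 * ‖z‖^2 := by
        rw [norm_smul, Real.norm_eq_abs, mul_pow, sq_abs]
      rw [Real.norm_eq_abs]
      rw [h3] at h1
      calc |f (x + μ • z)| = |(f (x + μ • z) - f x - ⟪g, μ • z⟫_ℝ) + f x + ⟪g, μ • z⟫_ℝ| := by ring_nf
        _ ≤ |f (x + μ • z) - f x - ⟪g, μ • z⟫_ℝ| + |f x| + |⟪g, μ • z⟫_ℝ| := by
            exact (abs_add_le _ _).trans (add_le_add_left (abs_add_le _ _) _)
        _ ≤ L/2 * (μ^2 * ‖z‖^2) + |f x| + ‖g‖ * μ * ‖z‖ := by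
            exact add_le_add (add_le_add_left h1 _) h2
        _ = |f x| + ‖g‖ * μ * ‖z‖ + L/2 * μ^2 * ‖z‖^2 := by ring
  have hdiff_int : Integrable (fun z => f (x + μ • z) - f x - ⟪g, μ • z⟫_ℝ) (stdGaussian d) :=
    (hf_int.sub (integrable_const _)).sub hinner_int
  -- the inner-product term integrates to zero
  have hinner_zero : ∫ z, ⟪g, μ • z⟫_ℝ ∂(stdGaussian d) = 0 := by
    simp_rw [inner_smul_right]
    rw [integral_const_mul, integral_inner_stdGaussian]
    ring
  have hkey : (∫ z, f (x + μ • z) ∂(stdGaussian d)) - f x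
      = ∫ z, (f (x + μ • z) - f x - ⟪g, μ • z⟫_ℝ) ∂(stdGaussian d) := by
    have hA : Integrable (fun z => f (x + μ • z) - f x) (stdGaussian d) :=
      hf_int.sub (integrable_const _)
    rw [integral_sub hA hinner_int,
      integral_sub hf_int (integrable_const _), integral_const, hinner_zero]
    simp
  rw [hkey]
  calc |∫ z, (f (x + μ • z) - f x - ⟪g, μ • z⟫_ℝ) ∂(stdGaussian d)|
      ≤ ∫ z, |f (x + μ • z) - f x - ⟪g, μ • z⟫_ℝ| ∂(stdGaussian d) := by
        simpa [Real.norm_eq_abs] using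
          norm_integral_le_integral_norm (μ := stdGaussian d)
            (f := fun z => f (x + μ • z) - f x - ⟪g, μ • z⟫_ℝ)
    _ ≤ ∫ z, L/2 * μ^2 * ‖z‖^2 ∂(stdGaussian d) := by
        refine integral_mono hdiff_int.abs ((integrable_norm_sq_stdGaussian d).const_mul _) ?_
        intro z
        have h1 := hTay (μ • z)
        have h3 : ‖μ • z‖^2 = μ^2 * ‖z‖^2 := by
          rw [norm_smul, Real.norm_eq_abs, mul_pow, sq_abs]
        rw [h3] at h1
        calc |f (x + μ • z) - f x - ⟪g, μ • z⟫_ℝ| ≤ L/2 * (μ^2 * ‖z‖^2) := h1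
          _ = L/2 * μ^2 * ‖z‖^2 := by ring
    _ = (1/2) * μ^2 * L * d := by
        rw [integral_const_mul, integral_norm_sq_stdGaussian]
        ring
end

section
/- For the Gaussian smoothing f^μ of an L-smooth function f, the gradient approximation error satisfies ‖∇f^μ(x) - ∇f(x)‖ ≤ (μL/2)(d+3)^{3/2} for all x ∈ ℝ^d. -/
open MeasureTheory ProbabilityTheory Real InnerProductSpace

lemma integrable_gaussian_iff {g : ℝ → ℝ} :
    Integrable g (gaussianReal 0 1) ↔ Integrable (fun x => g x * gaussianPDFReal 0 1 x) volume := by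
  rw [gaussianReal_of_var_ne_zero 0 one_ne_zero]
  refine (integrable_withDensity_iff (f := gaussianPDF 0 1) (g := g)
    (measurable_gaussianPDF 0 1)
    (by filter_upwards with x using ENNReal.ofReal_lt_top)).trans (integrable_congr ?_)
  filter_upwards with x
  simp [gaussianPDF, ENNReal.toReal_ofReal (gaussianPDFReal_nonneg 0 1 x)]

lemma integral_gaussian_eq (g : ℝ → ℝ) :
    ∫ x, g x ∂(gaussianReal 0 1) = ∫ x, gaussianPDFReal 0 1 x * g x := by
  rw [gaussianReal_of_var_ne_zero 0 one_ne_zero]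
  have h : (gaussianPDF 0 1) = fun x => (((gaussianPDFReal 0 1 x).toNNReal : NNReal) : ENNReal) := rfl
  rw [h, integral_withDensity_eq_integral_smul ((measurable_gaussianPDFReal 0 1).real_toNNReal)]
  congr 1; funext x
  simp [NNReal.smul_def, Real.coe_toNNReal _ (gaussianPDFReal_nonneg 0 1 x)]

lemma pdf_eq (x : ℝ) : gaussianPDFReal 0 1 x = (Real.sqrt (2*π))⁻¹ * Real.exp (-x^2/2) := by
  simp [gaussianPDFReal]

lemma integrable_abs_gaussian : Integrable (fun x => |x|) (gaussianReal 0 1) := by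
  rw [integrable_gaussian_iff]
  have h := (integrable_mul_exp_neg_mul_sq (b := 1/2) (by norm_num)).abs.const_mul (Real.sqrt (2*π))⁻¹
  refine h.congr (Filter.Eventually.of_forall fun x => ?_)
  dsimp only
  rw [pdf_eq, abs_mul, Real.abs_exp]
  rw [show -(1/2 : ℝ) * x^2 = -x^2/2 by ring]
  ring

lemma integrable_sq_gaussian : Integrable (fun x => x^2) (gaussianReal 0 1) := by
  rw [integrable_gaussian_iff]
  have h := (integrable_rpow_mul_exp_neg_mul_sq (b := 1/2) (by norm_num) (s := 2) (by norm_num)).const_mul (Real.sqrt (2*π))⁻¹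
  refine h.congr (Filter.Eventually.of_forall fun x => ?_)
  dsimp only
  have hx : x ^ (2:ℝ) = x^2 := by
    rw [show ((2:ℝ)) = ((2:ℕ) : ℝ) from by norm_num, Real.rpow_natCast]
  rw [pdf_eq, hx, show -(1/2 : ℝ) * x^2 = -x^2/2 by ring]
  ring

lemma integral_abs_gaussian_le : ∫ x, |x| ∂(gaussianReal 0 1) ≤ Real.sqrt 2 := by
  rw [integral_gaussian_eq]
  have key : ∀ x : ℝ, gaussianPDFReal 0 1 x * |x| ≤ (Real.sqrt (2*π))⁻¹ * Real.exp (-x^2/4) := by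
    intro x
    rw [pdf_eq, mul_assoc]
    have h1 : |x| ≤ Real.exp (x^2/4) := by
      have := Real.add_one_le_exp (x^2/4)
      nlinarith [sq_nonneg (|x| - 2), sq_abs x]
    have h2 : Real.exp (-x^2/2) * |x| ≤ Real.exp (-x^2/4) := by
      calc Real.exp (-x^2/2) * |x| ≤ Real.exp (-x^2/2) * Real.exp (x^2/4) :=
            mul_le_mul_of_nonneg_left h1 (Real.exp_pos _).le
        _ = Real.exp (-x^2/4) := by rw [← Real.exp_add]; ring_nf
    exact mul_le_mul_of_nonneg_left h2 (by positivity)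
  have hint : Integrable (fun x => (Real.sqrt (2*π))⁻¹ * Real.exp (-x^2/4)) volume := by
    have := (integrable_exp_neg_mul_sq (b := 1/4) (by norm_num)).const_mul (Real.sqrt (2*π))⁻¹
    refine this.congr (Filter.Eventually.of_forall fun x => ?_)
    dsimp only
    rw [show -(1/4 : ℝ) * x^2 = -x^2/4 by ring]
  have hint2 : Integrable (fun x => gaussianPDFReal 0 1 x * |x|) volume := by
    have := integrable_abs_gaussian
    rw [integrable_gaussian_iff] at this
    refine this.congr (Filter.Eventually.of_forall fun x => by ring)
  calc ∫ x, gaussianPDFReal 0 1 x * |x| ≤ ∫ x, (Real.sqrt (2*π))⁻¹ * Real.exp (-x^2/4) :=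
        integral_mono hint2 hint key
    _ = (Real.sqrt (2*π))⁻¹ * Real.sqrt (π / (1/4)) := by
        rw [MeasureTheory.integral_const_mul]
        congr 1
        rw [← integral_gaussian (1/4)]
        congr 1; funext x; rw [show -(1/4 : ℝ) * x^2 = -x^2/4 by ring]
    _ ≤ Real.sqrt 2 := by
        rw [show π / (1/4 : ℝ) = 4 * π by ring, ← Real.sqrt_inv,
          ← Real.sqrt_mul (by positivity)]
        apply Real.sqrt_le_sqrt
        rw [show (2*π)⁻¹ * (4*π) = 2 * (π * π⁻¹) by ring, mul_inv_cancel₀ pi_ne_zero]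
        norm_num

lemma map_eval {d : ℕ} (i : Fin d) :
    (Measure.pi fun _ : Fin d => gaussianReal 0 1).map (Function.eval i) = gaussianReal 0 1 := by
  apply Measure.ext
  intro s hs
  rw [Measure.map_apply (measurable_pi_apply i) hs, Set.eval_preimage, Measure.pi_pi,
    Fintype.prod_eq_single i (fun j hj => by simp [Function.update_of_ne hj])]
  simp

instance stdGaussian_prob (d : ℕ) : IsProbabilityMeasure (stdGaussian d) := by
  unfold _root_.stdGaussian
  exact Measure.isProbabilityMeasure_map (MeasurableEquiv.toLp 2 (Fin d → ℝ)).measurable.aemeasurable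

lemma stdGaussian_integral_eq {d : ℕ} (g : EuclideanSpace ℝ (Fin d) → ℝ) :
    ∫ z, g z ∂(stdGaussian d)
      = ∫ w, g ((MeasurableEquiv.toLp 2 (Fin d → ℝ)) w)
          ∂(Measure.pi fun _ : Fin d => gaussianReal 0 1) :=
  MeasureTheory.integral_map_equiv _ _

lemma stdGaussian_integrable_iff {d : ℕ} (g : EuclideanSpace ℝ (Fin d) → ℝ) :
    Integrable g (stdGaussian d)
      ↔ Integrable (fun w => g ((MeasurableEquiv.toLp 2 (Fin d → ℝ)) w))
          (Measure.pi fun _ : Fin d => gaussianReal 0 1) :=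
  MeasureTheory.integrable_map_equiv _ _


lemma integrable_eval_pi {d : ℕ} {i : Fin d} {q : ℝ → ℝ} (hq : Integrable q (gaussianReal 0 1)) :
    Integrable (fun w : Fin d → ℝ => q (w i)) (Measure.pi fun _ : Fin d => gaussianReal 0 1) := by
  have h : Integrable q ((Measure.pi fun _ : Fin d => gaussianReal 0 1).map (Function.eval i)) := by
    rw [map_eval i]; exact hq
  exact h.comp_measurable (measurable_pi_apply i)

lemma integral_eval_pi {d : ℕ} {i : Fin d} {q : ℝ → ℝ} (hq : AEStronglyMeasurable q (gaussianReal 0 1)) :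
    ∫ w, q (w i) ∂(Measure.pi fun _ : Fin d => gaussianReal 0 1) = ∫ x, q x ∂(gaussianReal 0 1) := by
  have h := integral_map (φ := Function.eval i)
      (μ := Measure.pi fun _ : Fin d => gaussianReal 0 1)
      (measurable_pi_apply i).aemeasurable
      (by rw [map_eval i]; exact hq)
  rw [map_eval i] at h
  exact h.symm

lemma norm_le_sum_abs {d : ℕ} (z : EuclideanSpace ℝ (Fin d)) : ‖z‖ ≤ ∑ i, |z i| := by
  rw [EuclideanSpace.norm_eq]
  have h1 : ∑ i, ‖z i‖ ^ 2 ≤ (∑ i, |z i|) ^ 2 := by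
    simpa [Real.norm_eq_abs] using
      Finset.sum_sq_le_sq_sum_of_nonneg (f := fun i => |z i|) (fun i _ => abs_nonneg _)
  calc Real.sqrt (∑ i, ‖z i‖ ^ 2) ≤ Real.sqrt ((∑ i, |z i|) ^ 2) := Real.sqrt_le_sqrt h1
    _ = ∑ i, |z i| := Real.sqrt_sq (Finset.sum_nonneg fun i _ => abs_nonneg _)

lemma norm_sq_eq' {d : ℕ} (z : EuclideanSpace ℝ (Fin d)) : ‖z‖ ^ 2 = ∑ i, (z i) ^ 2 := by
  rw [EuclideanSpace.norm_eq, Real.sq_sqrt (Finset.sum_nonneg fun i _ => sq_nonneg _)]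
  simp [Real.norm_eq_abs, sq_abs]

lemma integrable_sum_abs (d : ℕ) :
    Integrable (fun z : EuclideanSpace ℝ (Fin d) => ∑ i, |z i|) (stdGaussian d) := by
  rw [stdGaussian_integrable_iff]
  exact integrable_finset_sum _ (fun i _ => integrable_eval_pi integrable_abs_gaussian)

lemma integrable_norm_std (d : ℕ) :
    Integrable (fun z : EuclideanSpace ℝ (Fin d) => ‖z‖) (stdGaussian d) := by
  refine (integrable_sum_abs d).mono' continuous_norm.aestronglyMeasurable ?_
  filter_upwards with z
  rw [Real.norm_eq_abs, abs_of_nonneg (norm_nonneg z)]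
  exact norm_le_sum_abs z

lemma integrable_norm_sq_std (d : ℕ) :
    Integrable (fun z : EuclideanSpace ℝ (Fin d) => ‖z‖ ^ 2) (stdGaussian d) := by
  have h : Integrable (fun z : EuclideanSpace ℝ (Fin d) => ∑ i, (z i) ^ 2) (stdGaussian d) := by
    rw [stdGaussian_integrable_iff]
    exact integrable_finset_sum _ (fun i _ => integrable_eval_pi integrable_sq_gaussian)
  exact h.congr (Filter.Eventually.of_forall fun z => (norm_sq_eq' z).symm)

lemma integral_norm_std_le (d : ℕ) :
    ∫ z, ‖z‖ ∂(stdGaussian d) ≤ Real.sqrt 2 * d := by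
  calc ∫ z, ‖z‖ ∂(stdGaussian d) ≤ ∫ z, ∑ i, |z i| ∂(stdGaussian d) :=
        integral_mono (integrable_norm_std d) (integrable_sum_abs d) norm_le_sum_abs
    _ = ∑ i : Fin d, ∫ x, |x| ∂(gaussianReal 0 1) := by
        rw [stdGaussian_integral_eq, integral_finset_sum]
        · exact Finset.sum_congr rfl fun i _ =>
            integral_eval_pi (continuous_abs.aestronglyMeasurable)
        · exact fun i _ => integrable_eval_pi integrable_abs_gaussian
    _ ≤ ∑ i : Fin d, Real.sqrt 2 := Finset.sum_le_sum fun i _ => integral_abs_gaussian_le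
    _ = Real.sqrt 2 * d := by simp [mul_comm]

variable {d : ℕ}

-- MVT-type bound
lemma key_bound {f : EuclideanSpace ℝ (Fin d) → ℝ} {L : ℝ} (hL : 0 ≤ L)
    (hdiff : Differentiable ℝ f)
    (hlip : ∀ x y, ‖gradient f x - gradient f y‖ ≤ L * ‖x - y‖)
    (y z : EuclideanSpace ℝ (Fin d)) :
    ‖f z - f y‖ ≤ (‖gradient f y‖ + L * ‖z - y‖) * ‖z - y‖ := by
  have hfd : ∀ u, ‖fderiv ℝ f u‖ = ‖gradient f u‖ := fun u =>
    ((toDual ℝ (EuclideanSpace ℝ (Fin d))).symm.norm_map (fderiv ℝ f u)).symm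
  refine (convex_closedBall y (‖z - y‖)).norm_image_sub_le_of_norm_fderiv_le
    (fun u _ => hdiff u) (fun u hu => ?_) (Metric.mem_closedBall_self (norm_nonneg _))
    (by simpa [Metric.mem_closedBall, dist_eq_norm] using le_refl ‖z - y‖)
  rw [hfd]
  calc ‖gradient f u‖ ≤ ‖gradient f y‖ + ‖gradient f u - gradient f y‖ := by
        simpa using norm_add_le (gradient f y) (gradient f u - gradient f y)
    _ ≤ ‖gradient f y‖ + L * ‖u - y‖ := by linarith [hlip u y]
    _ ≤ ‖gradient f y‖ + L * ‖z - y‖ := by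
        have : ‖u - y‖ ≤ ‖z - y‖ := by
          rwa [Metric.mem_closedBall, dist_eq_norm] at hu
        nlinarith

lemma harith_aux (d : ℕ) (L μ : ℝ) (hL : 0 ≤ L) (hμ : 0 ≤ μ) :
    (L * μ) * (Real.sqrt 2 * d) ≤ μ * L / 2 * ((d : ℝ) + 3) ^ ((3:ℝ)/2) := by
  have hd : (0:ℝ) ≤ d := Nat.cast_nonneg d
  have h1 : ((d:ℝ) + 3) ^ ((3:ℝ)/2) = Real.sqrt (((d:ℝ) + 3)^3) := by
    rw [Real.sqrt_eq_rpow, ← Real.rpow_natCast ((d:ℝ) + 3) 3, ← Real.rpow_mul (by positivity)]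
    norm_num
  rw [h1]
  have h2 : Real.sqrt 2 * d = Real.sqrt (2 * (d:ℝ)^2) := by
    rw [Real.sqrt_mul (by norm_num), Real.sqrt_sq hd]
  have h3 : Real.sqrt (2 * (d:ℝ)^2) ≤ Real.sqrt (((d:ℝ) + 3)^3 / 4) := by
    apply Real.sqrt_le_sqrt
    nlinarith [hd]
  have h4 : Real.sqrt (((d:ℝ) + 3)^3 / 4) = Real.sqrt (((d:ℝ) + 3)^3) / 2 := by
    rw [Real.sqrt_div (by positivity) 4, show Real.sqrt 4 = 2 by
      rw [show (4:ℝ) = 2^2 by norm_num, Real.sqrt_sq zero_le_two]]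
  calc (L * μ) * (Real.sqrt 2 * (d:ℝ)) ≤ (L * μ) * (Real.sqrt (((d:ℝ) + 3)^3) / 2) := by
        rw [← h4, h2]
        exact mul_le_mul_of_nonneg_left h3 (by positivity)
    _ = μ * L / 2 * Real.sqrt (((d:ℝ) + 3)^3) := by ring

/-- Gradient approximation error of Gaussian smoothing:
`‖∇f^μ(x) - ∇f(x)‖ ≤ (μL/2)(d+3)^{3/2}`. -/
theorem gaussian_smoothing_gradient_error
    (d : ℕ) (L μ : ℝ) (hL : 0 ≤ L) (hμ : 0 < μ)
    (f : EuclideanSpace ℝ (Fin d) → ℝ)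
    (hdiff : Differentiable ℝ f)
    (hlip : ∀ x y, ‖gradient f x - gradient f y‖ ≤ L * ‖x - y‖) :
    ∀ x : EuclideanSpace ℝ (Fin d),
      ‖gradient (fun y => ∫ z, f (y + μ • z) ∂(stdGaussian d)) x - gradient f x‖
        ≤ μ * L / 2 * ((d : ℝ) + 3) ^ ((3:ℝ)/2) := by
  intro x
  have hcont : Continuous f := hdiff.continuous
  have haff : ∀ y : EuclideanSpace ℝ (Fin d), Continuous fun z : EuclideanSpace ℝ (Fin d) => f (y + μ • z) :=
    fun y => hcont.comp (continuous_const.add (continuous_id.const_smul μ))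
  -- norms of fderiv vs gradient
  have hfd : ∀ u, ‖fderiv ℝ f u‖ = ‖gradient f u‖ := fun u =>
    ((toDual ℝ (EuclideanSpace ℝ (Fin d))).symm.norm_map (fderiv ℝ f u)).symm
  have hfdsub : ∀ u v, ‖fderiv ℝ f u - fderiv ℝ f v‖ = ‖gradient f u - gradient f v‖ := by
    intro u v
    have := (toDual ℝ (EuclideanSpace ℝ (Fin d))).symm.norm_map (fderiv ℝ f u - fderiv ℝ f v)
    rw [map_sub] at this
    exact this.symm
  -- continuity of the gradient, hence of fderiv
  have hgradlip : LipschitzWith (Real.toNNReal L) (gradient f) := by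
    apply LipschitzWith.of_dist_le_mul
    intro a b
    rw [dist_eq_norm, dist_eq_norm, Real.coe_toNNReal L hL]
    exact hlip a b
  have hfderiv_eq : ∀ u, fderiv ℝ f u = toDual ℝ (EuclideanSpace ℝ (Fin d)) (gradient f u) := fun u =>
    ((toDual ℝ (EuclideanSpace ℝ (Fin d))).apply_symm_apply (fderiv ℝ f u)).symm
  have hfdcont : Continuous (fun u => fderiv ℝ f u) := by
    have : Continuous (fun u => toDual ℝ (EuclideanSpace ℝ (Fin d)) (gradient f u)) :=
      (toDual ℝ (EuclideanSpace ℝ (Fin d))).continuous.comp hgradlip.continuous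
    simpa [← hfderiv_eq] using this
  -- the dominated-derivative theorem
  have hasF : HasFDerivAt (fun y => ∫ z, f (y + μ • z) ∂(stdGaussian d))
      (∫ z, fderiv ℝ f (x + μ • z) ∂(stdGaussian d)) x := by
    apply hasFDerivAt_integral_of_dominated_of_fderiv_le
      (F' := fun y z => fderiv ℝ f (y + μ • z))
      (bound := fun z => ‖gradient f x‖ + L * (1 + μ * ‖z‖)) (Metric.ball_mem_nhds x zero_lt_one)
    · filter_upwards with y
      exact (haff y).aestronglyMeasurable
    · -- integrability of z ↦ f (x + μ • z)
      refine Integrable.mono' (g := fun z => |f x| + ‖gradient f x‖ * (μ * ‖z‖) + (L * μ^2) * ‖z‖^2)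
        ?_ (haff x).aestronglyMeasurable ?_
      · have : Integrable (fun z : EuclideanSpace ℝ (Fin d) =>
            |f x| + ‖gradient f x‖ * (μ * ‖z‖) + (L * μ^2) * ‖z‖^2) (stdGaussian d) := by
          refine Integrable.add (Integrable.add (integrable_const (|f x|)) ?_) ?_
          · exact ((integrable_norm_std d).const_mul μ).const_mul (‖gradient f x‖)
          · exact (integrable_norm_sq_std d).const_mul (L * μ^2)
        exact this
      · filter_upwards with z
        have hk := key_bound hL hdiff hlip x (x + μ • z)
        have hz : ‖x + μ • z - x‖ = μ * ‖z‖ := by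
          rw [add_sub_cancel_left, norm_smul, Real.norm_eq_abs, abs_of_pos hμ]
        rw [hz] at hk
        have : ‖f (x + μ • z)‖ ≤ ‖f x‖ + (‖gradient f x‖ + L * (μ * ‖z‖)) * (μ * ‖z‖) := by
          calc ‖f (x + μ • z)‖ ≤ ‖f x‖ + ‖f (x + μ • z) - f x‖ := by
                simpa using norm_add_le (f x) (f (x + μ • z) - f x)
            _ ≤ ‖f x‖ + (‖gradient f x‖ + L * (μ * ‖z‖)) * (μ * ‖z‖) := by linarith
        calc ‖f (x + μ • z)‖ ≤ ‖f x‖ + (‖gradient f x‖ + L * (μ * ‖z‖)) * (μ * ‖z‖) := this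
          _ ≤ |f x| + ‖gradient f x‖ * (μ * ‖z‖) + (L * μ^2) * ‖z‖^2 := by
              rw [Real.norm_eq_abs]
              nlinarith [norm_nonneg z, sq_nonneg ‖z‖]
    · exact (hfdcont.comp (continuous_const.add (continuous_id.const_smul μ))).aestronglyMeasurable
    · filter_upwards with z y hy
      rw [hfd]
      have h1 : ‖gradient f (y + μ • z)‖ ≤ ‖gradient f x‖ + L * ‖y + μ • z - x‖ := by
        calc ‖gradient f (y + μ • z)‖
            ≤ ‖gradient f x‖ + ‖gradient f (y + μ • z) - gradient f x‖ := by
              simpa using norm_add_le (gradient f x) (gradient f (y + μ • z) - gradient f x)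
          _ ≤ _ := by linarith [hlip (y + μ • z) x]
      have h2 : ‖y + μ • z - x‖ ≤ 1 + μ * ‖z‖ := by
        calc ‖y + μ • z - x‖ = ‖(y - x) + μ • z‖ := by rw [show y + μ • z - x = (y - x) + μ • z from by abel]
          _ ≤ ‖y - x‖ + ‖μ • z‖ := norm_add_le _ _
          _ ≤ 1 + μ * ‖z‖ := by
              have : ‖y - x‖ < 1 := by rwa [Metric.mem_ball, dist_eq_norm] at hy
              rw [norm_smul, Real.norm_eq_abs, abs_of_pos hμ]
              linarith
      nlinarith
    · refine ((integrable_const (‖gradient f x‖ + L)).add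
        ((integrable_norm_std d).const_mul (L*μ))).congr ?_
      filter_upwards with z
      show ‖gradient f x‖ + L + L * μ * ‖z‖ = ‖gradient f x‖ + L * (1 + μ * ‖z‖)
      ring
    · filter_upwards with z y hy
      have h := (hdiff (y + μ • z)).hasFDerivAt.comp y ((hasFDerivAt_id y).add_const (μ • z))
      simpa [Function.comp_def] using h
  -- integrability of the fderiv family
  have hΦint : Integrable (fun z => fderiv ℝ f (x + μ • z)) (stdGaussian d) := by
    refine Integrable.mono' (g := fun z => ‖gradient f x‖ + (L * μ) * ‖z‖)
      ((integrable_const _).add ((integrable_norm_std d).const_mul (L * μ)))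
      (hfdcont.comp (continuous_const.add (continuous_id.const_smul μ))).aestronglyMeasurable ?_
    filter_upwards with z
    rw [hfd]
    have h1 := hlip (x + μ • z) x
    have hz : ‖x + μ • z - x‖ = μ * ‖z‖ := by
      rw [add_sub_cancel_left, norm_smul, Real.norm_eq_abs, abs_of_pos hμ]
    rw [hz] at h1
    calc ‖gradient f (x + μ • z)‖
        ≤ ‖gradient f x‖ + ‖gradient f (x + μ • z) - gradient f x‖ := by
          simpa using norm_add_le (gradient f x) (gradient f (x + μ • z) - gradient f x)
      _ ≤ ‖gradient f x‖ + (L * μ) * ‖z‖ := by rw [mul_assoc]; linarith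
  -- identify the gradient of the smoothed function
  have hgradg : gradient (fun y => ∫ z, f (y + μ • z) ∂(stdGaussian d)) x
      = (toDual ℝ (EuclideanSpace ℝ (Fin d))).symm (∫ z, fderiv ℝ f (x + μ • z) ∂(stdGaussian d)) := by
    show (toDual ℝ (EuclideanSpace ℝ (Fin d))).symm
        (fderiv ℝ (fun y => ∫ z, f (y + μ • z) ∂(stdGaussian d)) x) = _
    rw [hasF.fderiv]
  have hgradf : gradient f x = (toDual ℝ (EuclideanSpace ℝ (Fin d))).symm (fderiv ℝ f x) := rfl
  rw [hgradg, hgradf, ← map_sub, (toDual ℝ (EuclideanSpace ℝ (Fin d))).symm.norm_map]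
  have hsplit : (∫ z, fderiv ℝ f (x + μ • z) ∂(stdGaussian d)) - fderiv ℝ f x
      = ∫ z, (fderiv ℝ f (x + μ • z) - fderiv ℝ f x) ∂(stdGaussian d) := by
    rw [integral_sub hΦint (integrable_const _), integral_const, probReal_univ]
    simp
  rw [hsplit]
  have hbnd : ‖∫ z, (fderiv ℝ f (x + μ • z) - fderiv ℝ f x) ∂(stdGaussian d)‖
      ≤ ∫ z, (L * μ) * ‖z‖ ∂(stdGaussian d) := by
    refine norm_integral_le_of_norm_le ((integrable_norm_std d).const_mul (L * μ)) ?_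
    filter_upwards with z
    rw [hfdsub]
    have h1 := hlip (x + μ • z) x
    have hz : ‖x + μ • z - x‖ = μ * ‖z‖ := by
      rw [add_sub_cancel_left, norm_smul, Real.norm_eq_abs, abs_of_pos hμ]
    rw [hz] at h1
    rw [mul_assoc]; linarith
  have hint : ∫ z, (L * μ) * ‖z‖ ∂(stdGaussian d) ≤ (L * μ) * (Real.sqrt 2 * d) := by
    rw [MeasureTheory.integral_const_mul]
    exact mul_le_mul_of_nonneg_left (integral_norm_std_le d) (by positivity)
  exact hbnd.trans (hint.trans (harith_aux d L μ hL hμ.le))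
end
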